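/- For every real y with \(|y| \ge 100\), the derivative of the stable self-similar Burgers profile satisfies \(-\tfrac{7}{20}\,|y|^{-2/3} \le \overline{W}'(y) \le -\tfrac{1}{4}\,|y|^{-2/3}\). -/

import Mathlib

/-!
`W̄ y` is Cardano's formula for the real root of `w ^ 3 + w + y = 0`, so the inverse function
theorem gives `W̄' = -1 / (1 + 3 W̄ ^ 2)`. Writing `u = |W̄ y|` and `r = |y| ^ (1/3)`, the cubic
reads `u ^ 3 + u = r ^ 3`; since `x ↦ x ^ 3 + x` is increasing this pins `u` between
`r - 1 / (2 r)` and `r`, hence `20 r ^ 2 / 7 ≤ 1 + 3 u ^ 2 ≤ 4 r ^ 2` once `r ≥ 4`.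
-/

/-- The stable self-similar Burgers profile. -/
noncomputable def burgersW (y : ℝ) : ℝ :=
  (-(y / 2) + Real.sqrt (1 / 27 + y ^ 2 / 4)) ^ ((1 : ℝ) / 3)
    - (y / 2 + Real.sqrt (1 / 27 + y ^ 2 / 4)) ^ ((1 : ℝ) / 3)

lemma rpow_one_div_three_pow_three {a : ℝ} (ha : 0 ≤ a) : (a ^ ((1 : ℝ) / 3)) ^ 3 = a := by
  rw [one_div]; exact_mod_cast Real.rpow_inv_natCast_pow ha three_ne_zero

lemma cardano_formula {a b : ℝ} (ha : 0 ≤ a) (hb : 0 ≤ b) (hab : a * b = 1 / 27) :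
    (a ^ ((1 : ℝ) / 3) - b ^ ((1 : ℝ) / 3)) ^ 3 + (a ^ ((1 : ℝ) / 3) - b ^ ((1 : ℝ) / 3))
      = a - b := by
  set α := a ^ ((1 : ℝ) / 3)
  set β := b ^ ((1 : ℝ) / 3)
  have hα : α ^ 3 = a := rpow_one_div_three_pow_three ha
  have hβ : β ^ 3 = b := rpow_one_div_three_pow_three hb
  have hαβ : α * β = 1 / 3 := by
    have hprod : (α * β) ^ 3 = (1 / 3) ^ 3 := by rw [mul_pow, hα, hβ, hab]; norm_num
    exact (pow_left_inj₀ (by positivity) (by norm_num) three_ne_zero).mp hprod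
  -- `(α - β) ^ 3 = α ^ 3 - β ^ 3 - 3 α β (α - β)`
  linear_combination hα - hβ - 3 * (α - β) * hαβ

lemma burgersW_cubic (y : ℝ) : burgersW y ^ 3 + burgersW y + y = 0 := by
  set s := Real.sqrt (1 / 27 + y ^ 2 / 4)
  have hs2 : s ^ 2 = 1 / 27 + y ^ 2 / 4 := Real.sq_sqrt (by positivity)
  have hs : |y / 2| ≤ s := Real.abs_le_sqrt (by rw [div_pow]; linarith [sq_nonneg y])
  obtain ⟨hlo, hhi⟩ := abs_le.mp hs
  have h := cardano_formula (a := -(y / 2) + s) (b := y / 2 + s) (by linarith) (by linarith)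
    (by linear_combination hs2)
  unfold burgersW
  linear_combination h

lemma continuous_burgersW : Continuous burgersW := by
  unfold burgersW
  fun_prop (disch := norm_num)

lemma hasDerivAt_burgersW (y : ℝ) :
    HasDerivAt burgersW (-(1 + 3 * burgersW y ^ 2))⁻¹ y := by
  have hf : HasDerivAt (fun w : ℝ => -(w ^ 3 + w)) (-(1 + 3 * burgersW y ^ 2)) (burgersW y) :=
    (((hasDerivAt_pow 3 _).fun_add (hasDerivAt_id' _)).fun_neg).congr_deriv (by ring)
  exact hf.of_local_left_inverse continuous_burgersW.continuousAt
    (neg_ne_zero.mpr (by positivity)) (.of_forall fun x => by linear_combination -burgersW_cubic x)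

lemma abs_pow_three_add_abs_of_cubic {w y : ℝ} (h : w ^ 3 + w + y = 0) : |w| ^ 3 + |w| = |y| := by
  have : |y| = |w| * (w ^ 2 + 1) := by
    rw [show y = -(w * (w ^ 2 + 1)) by linear_combination h, abs_neg, abs_mul,
      abs_of_pos (by positivity : 0 < w ^ 2 + 1)]
  rw [this, ← sq_abs w]; ring

lemma le_of_pow_three_add_le {u v : ℝ} (h : u ^ 3 + u ≤ v ^ 3 + v) : u ≤ v := by
  by_contra! hvu
  nlinarith [sq_nonneg (u + v), sq_nonneg u, sq_nonneg v]

lemma one_add_three_sq_le_of_cubic {u r : ℝ} (hr : 1 ≤ r) (h : u ^ 3 + u = r ^ 3) :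
    1 + 3 * u ^ 2 ≤ 4 * r ^ 2 := by
  have hur : u ≤ r := le_of_pow_three_add_le (by linarith)
  have hru : -r ≤ u := le_of_pow_three_add_le (by
    rw [h]; nlinarith [pow_pos (by linarith : (0 : ℝ) < r) 3])
  nlinarith

lemma le_one_add_three_sq_of_cubic {u r : ℝ} (hr : 4 ≤ r) (h : u ^ 3 + u = r ^ 3) :
    20 * r ^ 2 ≤ 7 * (1 + 3 * u ^ 2) := by
  have hr0 : 0 < r := by linarith
  -- `r - 1 / (2 r)` undershoots the root `u = r - 1 / (3 r) + O(r⁻³)`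
  have hexpand : (r - 1 / (2 * r)) ^ 3 + (r - 1 / (2 * r))
      = r ^ 3 - (r / 2 - 1 / (4 * r)) - 1 / (8 * r ^ 3) := by
    field_simp; ring
  have hquarter : 1 / (4 * r) ≤ r / 2 := by
    rw [div_le_div_iff₀ (by positivity) (by norm_num)]; nlinarith
  have hvu : r - 1 / (2 * r) ≤ u := le_of_pow_three_add_le (by
    rw [hexpand, h]; linarith [(by positivity : 0 < 1 / (8 * r ^ 3))])
  have hv : 0 ≤ r - 1 / (2 * r) := by
    rw [sub_nonneg, div_le_iff₀ (by positivity)]; nlinarith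
  have hsq : (r - 1 / (2 * r)) ^ 2 ≤ u ^ 2 := pow_le_pow_left₀ hv hvu 2
  have hsq' : (r - 1 / (2 * r)) ^ 2 = r ^ 2 - 1 + (1 / (2 * r)) ^ 2 := by
    field_simp; ring
  nlinarith [sq_nonneg (1 / (2 * r))]

lemma rpow_neg_two_div_three {t : ℝ} (ht : 0 ≤ t) :
    t ^ (-(2 : ℝ) / 3) = ((t ^ ((1 : ℝ) / 3)) ^ 2)⁻¹ := by
  rw [← Real.rpow_natCast, ← Real.rpow_mul ht, ← Real.rpow_neg ht]
  norm_num

/-- Away from the origin (`|y| ≥ 100`) the derivative of `W̄` satisfies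
`-(7/20)|y|^(-2/3) ≤ W̄'(y) ≤ -(1/4)|y|^(-2/3)`. -/
theorem burgersW_deriv_away_from_zero (y : ℝ) (hy : 100 ≤ |y|) :
    -(7 / 20) * |y| ^ (-(2 : ℝ) / 3) ≤ deriv burgersW y ∧
      deriv burgersW y ≤ -(1 / 4) * |y| ^ (-(2 : ℝ) / 3) := by
  set r := |y| ^ ((1 : ℝ) / 3)
  set u := |burgersW y|
  have hr3 : r ^ 3 = |y| := rpow_one_div_three_pow_three (abs_nonneg y)
  have hr : 4 ≤ r := le_of_pow_le_pow_left₀ three_ne_zero (by positivity) (by linarith)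
  have hu : u ^ 3 + u = r ^ 3 := hr3 ▸ abs_pow_three_add_abs_of_cubic (burgersW_cubic y)
  rw [(hasDerivAt_burgersW y).deriv, ← sq_abs, rpow_neg_two_div_three (abs_nonneg y)]
  have hupper := one_add_three_sq_le_of_cubic (by linarith) hu
  have hlower := le_one_add_three_sq_of_cubic hr hu
  constructor <;> field_simp <;> linarith
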